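/- arXiv:1505.00830 — 4 statements merged into one kernel-verified Lean document; each statement's English description precedes it below -/
import Mathlib

section
/- Let c : M × N → R be continuous on compact spaces, and let ((x_1,y_1),...,(x_L,y_L)) be a cyclic alternant chain of even length L = 2K with K ≥ 2: x_{2k+2} = x_{2k+1} and y_{2k+3} = y_{2k+2} for 0 ≤ k ≤ K-1 (indices mod L, with y_{L+1} := y_1), the pairs (x_i,y_i) are pairwise distinct, and the set {(x_1,y_1),...,(x_L,y_L)} is c-cyclically monotone. Then ∑_{k=0}^{K-1} c(x_{2k+1}, y_{2k+1}) = ∑_{k=0}^{K-1} c(x_{2k+1}, y_{2k+2}). -/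
/-- `c`-cyclical monotonicity of a set `S ⊆ M × N`. -/
def CyclicallyMonotone {M N : Type*} (c : M → N → ℝ) (S : Set (M × N)) : Prop :=
  ∀ (I : ℕ) (p : Fin (I + 1) → M × N), (∀ i, p i ∈ S) →
    0 ≤ ∑ i : Fin (I + 1), (c (p (i + 1)).1 (p i).2 - c (p i).1 (p i).2)

/-- Cyclic chains yield optimal alternatives: for a continuous cost `c` on compact spaces,
a cyclic alternant chain `((x₁,y₁),…,(x_L,y_L))` of even length `L = 2K`, `K ≥ 2`
(with `x_{2k+2} = x_{2k+1}`, `y_{2k+3} = y_{2k+2}` and `y_{L+1} := y₁`, pairwise distinct pairs,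
and a `c`-cyclically monotone underlying set) satisfies
`∑_{k<K} c(x_{2k+1}, y_{2k+1}) = ∑_{k<K} c(x_{2k+1}, y_{2k+2})`. -/
theorem stmt2 {M N : Type*} [TopologicalSpace M] [TopologicalSpace N]
    [CompactSpace M] [CompactSpace N]
    (c : M → N → ℝ) (hc : Continuous fun p : M × N => c p.1 p.2)
    (K : ℕ) (hK : 2 ≤ K) (x : ℕ → M) (y : ℕ → N)
    (hx : ∀ k < K, x (2 * k + 2) = x (2 * k + 1))
    (hy : ∀ k < K, y (2 * k + 3) = y (2 * k + 2))
    (hper : y (2 * K + 1) = y 1)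
    (hdistinct : ∀ i j, 1 ≤ i → i < j → j ≤ 2 * K → (x i, y i) ≠ (x j, y j))
    (hmono : CyclicallyMonotone c {p | ∃ l, 1 ≤ l ∧ l ≤ 2 * K ∧ p = (x l, y l)}) :
    ∑ k ∈ Finset.range K, c (x (2 * k + 1)) (y (2 * k + 1))
      = ∑ k ∈ Finset.range K, c (x (2 * k + 1)) (y (2 * k + 2)) := by
  obtain ⟨J, rfl⟩ : ∃ J, K = J + 1 := ⟨K - 1, by omega⟩
  have hJ : 1 ≤ J := by omega
  -- the key wrap-around identity y 1 = y (2J+2)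
  have hwrap : y 1 = y (2 * J + 2) := by
    have h1 : y (2 * (J + 1) + 1) = y 1 := hper
    have h2 : y (2 * J + 3) = y (2 * J + 2) := hy J (by omega)
    have h3 : 2 * (J + 1) + 1 = 2 * J + 3 := by ring
    rw [← h1, h3, h2]
  have key1 : ∀ i : Fin (J + 1),
      y (2 * ((i + 1 : Fin (J + 1)) : ℕ) + 1) = y (2 * (i : ℕ) + 2) := by
    intro i
    rcases eq_or_ne i (Fin.last J) with h | h
    · subst h
      have h0 : ((Fin.last J + 1 : Fin (J + 1)) : ℕ) = 0 := by
        rw [Fin.last_add_one]; rfl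
      rw [h0]
      simpa [Fin.val_last] using hwrap
    · have hv : ((i + 1 : Fin (J + 1)) : ℕ) = (i : ℕ) + 1 :=
        Fin.val_add_one_of_lt (Fin.lt_last_iff_ne_last.mpr h)
      rw [hv, show 2 * ((i : ℕ) + 1) + 1 = 2 * (i : ℕ) + 3 by ring,
        hy (i : ℕ) i.isLt]
  have hnegval : ∀ i : Fin (J + 1), (i : ℕ) ≠ 0 →
      ((-i : Fin (J + 1)) : ℕ) = J + 1 - (i : ℕ) := by
    intro i hi
    rw [Fin.coe_neg, Nat.mod_eq_of_lt (by omega)]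
  have key2 : ∀ i : Fin (J + 1),
      y (2 * ((-i : Fin (J + 1)) : ℕ) + 1)
        = y (2 * ((-(i + 1) : Fin (J + 1)) : ℕ) + 2) := by
    intro i
    rcases eq_or_ne i 0 with h | h
    · subst h
      have h1 : ((-(0 : Fin (J + 1)) : Fin (J + 1)) : ℕ) = 0 := by simp
      have h2 : ((-(0 + 1 : Fin (J + 1)) : Fin (J + 1)) : ℕ) = J := by
        rw [zero_add]; exact Fin.coe_neg_one
      rw [h1, h2]
      simpa using hwrap
    · have hi0 : (i : ℕ) ≠ 0 := fun hv => h (Fin.ext hv)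
      have hni : ((-i : Fin (J + 1)) : ℕ) = J + 1 - (i : ℕ) := hnegval i hi0
      rcases eq_or_ne i (Fin.last J) with hl | hl
      · subst hl
        have h1 : ((Fin.last J + 1 : Fin (J + 1)) : ℕ) = 0 := by
          rw [Fin.last_add_one]; rfl
        have h2 : (Fin.last J + 1 : Fin (J + 1)) = 0 := Fin.ext (by simpa using h1)
        rw [hni, h2, neg_zero, Fin.val_zero, Fin.val_last,
          show J + 1 - J = 1 by omega]
        simpa using (hy 0 (by omega)).symm ▸ rfl
      · have hv : ((i + 1 : Fin (J + 1)) : ℕ) = (i : ℕ) + 1 :=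
          Fin.val_add_one_of_lt (Fin.lt_last_iff_ne_last.mpr hl)
        have hv0 : ((i + 1 : Fin (J + 1)) : ℕ) ≠ 0 := by omega
        have hn2 : ((-(i + 1) : Fin (J + 1)) : ℕ) = J - (i : ℕ) := by
          rw [hnegval (i + 1) hv0, hv]; omega
        have hiJ : (i : ℕ) ≤ J := by omega
        rw [hni, hn2, show 2 * (J + 1 - (i : ℕ)) + 1 = 2 * (J - (i : ℕ)) + 3 by omega,
          hy (J - (i : ℕ)) (by omega)]
  -- First application: forward cycle through the even-indexed points
  have h1 := hmono J (fun i => (x (2 * (i : ℕ) + 1), y (2 * (i : ℕ) + 2))) (by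
    intro i
    refine ⟨2 * (i : ℕ) + 2, by omega, by omega, ?_⟩
    rw [hx (i : ℕ) i.isLt])
  simp only at h1
  have e1 : ∀ i : Fin (J + 1),
      c (x (2 * ((i + 1 : Fin (J + 1)) : ℕ) + 1)) (y (2 * (i : ℕ) + 2))
        = c (x (2 * ((i + 1 : Fin (J + 1)) : ℕ) + 1))
            (y (2 * ((i + 1 : Fin (J + 1)) : ℕ) + 1)) := fun i => by rw [key1 i]
  simp only [e1] at h1
  rw [Finset.sum_sub_distrib,
    Fintype.sum_equiv (Equiv.addRight (1 : Fin (J + 1)))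
      (fun i : Fin (J + 1) => c (x (2 * ((i + 1 : Fin (J + 1)) : ℕ) + 1))
        (y (2 * ((i + 1 : Fin (J + 1)) : ℕ) + 1)))
      (fun i : Fin (J + 1) => c (x (2 * (i : ℕ) + 1)) (y (2 * (i : ℕ) + 1)))
      (fun i => rfl)] at h1
  -- Second application: backward cycle through the odd-indexed points
  have h2 := hmono J
    (fun i => (x (2 * ((-i : Fin (J + 1)) : ℕ) + 1), y (2 * ((-i : Fin (J + 1)) : ℕ) + 1)))
    (by
      intro i
      exact ⟨2 * ((-i : Fin (J + 1)) : ℕ) + 1, by omega,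
        by have := ((-i : Fin (J + 1))).isLt; omega, rfl⟩)
  simp only at h2
  have e2 : ∀ i : Fin (J + 1),
      c (x (2 * ((-(i + 1) : Fin (J + 1)) : ℕ) + 1)) (y (2 * ((-i : Fin (J + 1)) : ℕ) + 1))
        = c (x (2 * ((-(i + 1) : Fin (J + 1)) : ℕ) + 1))
            (y (2 * ((-(i + 1) : Fin (J + 1)) : ℕ) + 2)) := fun i => by rw [← key2 i]
  simp only [e2] at h2
  rw [Finset.sum_sub_distrib,
    Fintype.sum_equiv ((Equiv.addRight (1 : Fin (J + 1))).trans (Equiv.neg (Fin (J + 1))))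
      (fun i : Fin (J + 1) => c (x (2 * ((-(i + 1) : Fin (J + 1)) : ℕ) + 1))
        (y (2 * ((-(i + 1) : Fin (J + 1)) : ℕ) + 2)))
      (fun i : Fin (J + 1) => c (x (2 * (i : ℕ) + 1)) (y (2 * (i : ℕ) + 2)))
      (fun i => rfl),
    Fintype.sum_equiv (Equiv.neg (Fin (J + 1)))
      (fun i : Fin (J + 1) => c (x (2 * ((-i : Fin (J + 1)) : ℕ) + 1))
        (y (2 * ((-i : Fin (J + 1)) : ℕ) + 1)))
      (fun i : Fin (J + 1) => c (x (2 * (i : ℕ) + 1)) (y (2 * (i : ℕ) + 1)))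
      (fun i => rfl)] at h2
  rw [← Fin.sum_univ_eq_sum_range (fun k => c (x (2 * k + 1)) (y (2 * k + 1))),
    ← Fin.sum_univ_eq_sum_range (fun k => c (x (2 * k + 1)) (y (2 * k + 2)))]
  linarith
end

section
/- Let ψ : M → R be Lipschitz on a compact manifold, c ∈ C^1(M×N) with N compact, and suppose that whenever ψ is differentiable at x and y ∈ ∂_c ψ(x) (meaning ψ(x) = φ(y) − c(x,y) where ψ is the c-transform as in the envelope formula), one has −∂c/∂x(x,y) = dψ(x), with ∂_c ψ(x) nonempty closed for each x and the graph of ∂_c ψ closed. Then: if ∂ψ(x) (the Clarke differential) is a singleton, ψ is differentiable at x; and if ψ is differentiable at x, then ∂ψ(x) is a singleton. In particular, for two sequences x_k → x, x'_k → x of differentiability points with dψ(x_k) → p and dψ(x'_k) → q, choosing y_k ∈ ∂_c ψ(x_k), y'_k ∈ ∂_c ψ(x'_k) with limits ȳ, ȳ' ∈ ∂_c ψ(x), one gets p = −∂c/∂x(x,ȳ) and q = −∂c/∂x(x,ȳ'), so p = q when ψ is differentiable at x. -/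
open Filter Topology

/-- The Clarke generalized differential of `ψ` at `x`. -/
def ClarkeSubdiff {n : ℕ} (ψ : EuclideanSpace ℝ (Fin n) → ℝ) (x : EuclideanSpace ℝ (Fin n)) :
    Set (EuclideanSpace ℝ (Fin n) →L[ℝ] ℝ) :=
  convexHull ℝ {p | ∃ u : ℕ → EuclideanSpace ℝ (Fin n),
    (∀ k, DifferentiableAt ℝ ψ (u k)) ∧ Tendsto u atTop (nhds x) ∧
      Tendsto (fun k => fderiv ℝ ψ (u k)) atTop (nhds p)}

/-
Differentiable ⇒ singleton: for a limit `p` of gradients `dψ(u_k)` with `u_k → x`, pick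
`y_k ∈ ∂_cψ(u_k)`. A cluster point `ȳ` of `y_k` (compactness of `N`) lies in `∂_cψ(x)` by
closedness of the graph, and continuity of `∂c/∂x` turns `dψ(u_k) = -∂c/∂x(u_k, y_k)` into
`p = -∂c/∂x(x, ȳ)`, which is `dψ(x)` by the envelope identity at `x`. So every generator of
`∂ψ(x)` equals `dψ(x)`.

Singleton ⇒ differentiable: if `∂ψ(x) = {p}`, the gradients near `x` (bounded by the Lipschitz
constant) must be close to `p`, for otherwise a subsequence would converge to another element of
`∂ψ(x)`. Thus `ψ - p` has arbitrarily small Lipschitz constant on small balls around `x`, which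
is differentiability at `x` with derivative `p`.
-/

open Metric Set MeasureTheory
open scoped NNReal ENNReal

section SetAverage

variable {E F : Type*} [NormedAddCommGroup E] [NormedSpace ℝ E] [FiniteDimensional ℝ E]
  [NormedAddCommGroup F] {f : E → F} {K : ℝ≥0}
  [MeasurableSpace E] [BorelSpace E] {μ : Measure E} [μ.IsAddHaarMeasure] {t : Set E}

theorem LipschitzWith.integrableOn_comp_add (hf : LipschitzWith K f)
    (ht : Bornology.IsBounded t) (z : E) : IntegrableOn (fun a => f (z + a)) t μ :=
  ((hf.continuous.comp (continuous_const_add z)).continuousOn.integrableOn_compact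
    ht.isCompact_closure).mono_set subset_closure

variable [NormedSpace ℝ F] [FiniteDimensional ℝ F]

theorem LipschitzWith.integrableOn_fderiv_comp_add (hf : LipschitzWith K f)
    (ht : Bornology.IsBounded t) (z : E) : IntegrableOn (fun a => fderiv ℝ f (z + a)) t μ :=
  Measure.integrableOn_of_bounded ht.measure_lt_top.ne
    ((measurable_fderiv ℝ f).comp (measurable_const_add z)).aestronglyMeasurable
    (ae_of_all _ fun _ => norm_fderiv_le_of_lipschitz ℝ hf)

theorem LipschitzWith.hasFDerivAt_setAverage_comp_add (hf : LipschitzWith K f)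
    (ht : Bornology.IsBounded t) (z : E) :
    HasFDerivAt (fun w => ⨍ a in t, f (w + a) ∂μ) (⨍ a in t, fderiv ℝ f (z + a) ∂μ) z := by
  have : IsFiniteMeasure (μ.restrict t) := isFiniteMeasure_restrict.2 ht.measure_lt_top.ne
  have hdiff : ∀ᵐ a ∂μ, DifferentiableAt ℝ f (z + a) := by
    rw [ae_iff]
    exact (measure_preimage_add μ z _).trans (ae_iff.1 (hf.ae_differentiableAt (μ := μ)))
  have hderiv := (hasFDerivAt_integral_of_dominated_loc_of_lip (μ := μ.restrict t)
    (F := fun w a => f (w + a)) (F' := fun a => fderiv ℝ f (z + a)) (x₀ := z)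
    (bound := fun _ => (K : ℝ)) univ_mem
    (Eventually.of_forall fun w => (hf.integrableOn_comp_add ht w).aestronglyMeasurable)
    (hf.integrableOn_comp_add ht z) (hf.integrableOn_fderiv_comp_add ht z).aestronglyMeasurable
    (ae_of_all _ fun a => by
      simpa [Function.comp_def] using hf.comp (isometry_add_right a).lipschitz)
    (integrable_const _)
    (ae_restrict_of_ae <| hdiff.mono fun a ha =>
      ha.hasFDerivAt.comp z ((hasFDerivAt_id z).add_const a))).2
  simp_rw [setAverage_eq]
  exact hderiv.const_smul _

end SetAverage

section LipschitzDerivative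

variable {E F : Type*} [NormedAddCommGroup E] [NormedSpace ℝ E] [FiniteDimensional ℝ E]
  [NormedAddCommGroup F] [NormedSpace ℝ F] [FiniteDimensional ℝ F] {f : E → F} {K : ℝ≥0}

theorem LipschitzWith.dense_differentiableAt (hf : LipschitzWith K f) :
    Dense {x | DifferentiableAt ℝ f x} := by
  borelize E
  exact Measure.dense_of_ae (hf.ae_differentiableAt (μ := Measure.addHaar))

/-- Averaging `f` over balls of radius `r < δ` gives a `C¹` function that is `C`-Lipschitz on `s`
by the mean value inequality and stays within `K r` of `f`; let `r → 0`. -/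
theorem LipschitzWith.lipschitzOnWith_of_norm_fderiv_le (hf : LipschitzWith K f) {s : Set E}
    (hs : Convex ℝ s) {δ : ℝ} (hδ : 0 < δ) {C : ℝ≥0}
    (hC : ∀ w ∈ thickening δ s, DifferentiableAt ℝ f w → ‖fderiv ℝ f w‖ ≤ C) :
    LipschitzOnWith C f s := by
  borelize E
  refine LipschitzOnWith.of_dist_le_mul fun z hz z' hz' => ?_
  suffices h : ∀ r ∈ Ioo 0 δ, dist (f z) (f z') ≤ C * dist z z' + 2 * K * r by
    have hlim : Tendsto (fun r : ℝ => C * dist z z' + 2 * K * r) (𝓝[>] 0)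
        (𝓝 (C * dist z z')) := by
      refine (Continuous.tendsto' ?_ 0 _ (by simp)).mono_left nhdsWithin_le_nhds
      fun_prop
    exact ge_of_tendsto hlim (Filter.mem_of_superset (Ioo_mem_nhdsGT hδ) h)
  rintro r ⟨hr, hrδ⟩
  let μ : Measure E := Measure.addHaar
  have hμ0 : μ (ball 0 r) ≠ 0 := (measure_ball_pos μ 0 hr).ne'
  have hμtop : μ (ball 0 r) ≠ ∞ := measure_ball_lt_top.ne
  let A : E → F := fun w => ⨍ a in ball 0 r, f (w + a) ∂μ
  have hA_close : ∀ w, dist (A w) (f w) ≤ K * r := fun w =>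
    (convex_closedBall (f w) (K * r)).set_average_mem isClosed_closedBall hμ0 hμtop
      (ae_restrict_of_forall_mem measurableSet_ball fun a ha => by
        rw [mem_closedBall]
        calc dist (f (w + a)) (f w) ≤ K * dist (w + a) w := hf.dist_le_mul _ _
          _ ≤ K * r := by
            gcongr
            simpa [dist_eq_norm] using (mem_ball_zero_iff.1 ha).le)
      (hf.integrableOn_comp_add isBounded_ball w)
  have hA_deriv : ∀ w ∈ s, ‖⨍ a in ball 0 r, fderiv ℝ f (w + a) ∂μ‖ ≤ C := fun w hw =>
    mem_closedBall_zero_iff.1 <| (convex_closedBall 0 C).set_average_mem isClosed_closedBall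
      hμ0 hμtop (ae_restrict_of_forall_mem measurableSet_ball fun a ha => by
        rw [mem_closedBall_zero_iff]
        by_cases hd : DifferentiableAt ℝ f (w + a)
        · refine hC _ (mem_thickening_iff.2 ⟨w, hw, ?_⟩) hd
          simpa [dist_eq_norm] using (mem_ball_zero_iff.1 ha).trans hrδ
        · simp [fderiv_zero_of_not_differentiableAt hd])
      (hf.integrableOn_fderiv_comp_add isBounded_ball w)
  have hA_lip : dist (A z) (A z') ≤ C * dist z z' := by
    simpa [dist_eq_norm] using hs.norm_image_sub_le_of_norm_hasFDerivWithin_le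
      (fun w _ => (hf.hasFDerivAt_setAverage_comp_add isBounded_ball w).hasFDerivWithinAt)
      hA_deriv hz' hz
  calc dist (f z) (f z') ≤ dist (f z) (A z) + dist (A z) (A z') + dist (A z') (f z') :=
        dist_triangle4 _ _ _ _
    _ ≤ K * r + C * dist z z' + K * r := by
        gcongr
        · exact dist_comm (f z) (A z) ▸ hA_close z
        · exact hA_close z'
    _ = C * dist z z' + 2 * K * r := by ring

end LipschitzDerivative

theorem MapClusterPt.eq_of_tendsto {α X : Type*} [TopologicalSpace X] [T2Space X] {l : Filter α}
    {u : α → X} {p q : X} (hq : MapClusterPt q l u) (hp : Tendsto u l (𝓝 p)) : q = p :=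
  eq_of_nhds_neBot <| hq.neBot.mono (inf_le_inf_left _ hp)

theorem Filter.Tendsto.mapClusterPt_prodMk {α X Y : Type*} [TopologicalSpace X]
    [TopologicalSpace Y] {l : Filter α} {u : α → X} {v : α → Y} {x : X} {y : Y}
    (hu : Tendsto u l (𝓝 x)) (hv : MapClusterPt y l v) :
    MapClusterPt (x, y) l fun k => (u k, v k) := by
  rw [mapClusterPt_iff_frequently] at hv ⊢
  intro s hs
  obtain ⟨a, ha, b, hb, hab⟩ := mem_nhds_prod_iff.1 hs
  exact ((hv b hb).and_eventually (hu ha)).mono fun k hk => hab ⟨hk.2, hk.1⟩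

section Envelope

variable {E N : Type*} [NormedAddCommGroup E] [NormedSpace ℝ E] [TopologicalSpace N]
  [CompactSpace N] {ψ : E → ℝ} {c : E → N → ℝ} {S : E → Set N}

theorem exists_mem_eq_neg_fderiv_of_tendsto_fderiv
    (hcont : Continuous fun p : E × N => fderiv ℝ (fun x => c x p.2) p.1)
    (hSne : ∀ x, (S x).Nonempty) (hSclosed : IsClosed {p : E × N | p.2 ∈ S p.1})
    (henv : ∀ x y, DifferentiableAt ℝ ψ x → y ∈ S x →
      fderiv ℝ ψ x = - fderiv ℝ (fun x' => c x' y) x)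
    {u : ℕ → E} {x : E} {p : E →L[ℝ] ℝ} (hu : ∀ k, DifferentiableAt ℝ ψ (u k))
    (hux : Tendsto u atTop (𝓝 x)) (hp : Tendsto (fun k => fderiv ℝ ψ (u k)) atTop (𝓝 p)) :
    ∃ y ∈ S x, p = - fderiv ℝ (fun x' => c x' y) x := by
  choose y hy using fun k => hSne (u k)
  obtain ⟨y₀, hy₀⟩ := exists_clusterPt_of_compactSpace (map y atTop)
  have hcl := hux.mapClusterPt_prodMk hy₀
  refine ⟨y₀, hSclosed.mem_of_mapClusterPt hcl (Eventually.of_forall hy), ?_⟩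
  have hlim : MapClusterPt (- fderiv ℝ (fun x' => c x' y₀) x) atTop
      fun k => fderiv ℝ ψ (u k) := by
    refine (hcl.continuousAt_comp hcont.neg.continuousAt).congrFun
      (Eventually.of_forall fun k => ?_)
    exact (henv _ _ (hu k) (hy k)).symm
  exact (hlim.eq_of_tendsto hp).symm

end Envelope

section Clarke

variable {n : ℕ} {ψ : EuclideanSpace ℝ (Fin n) → ℝ} {K : ℝ≥0} {x : EuclideanSpace ℝ (Fin n)}

theorem clarkeSubdiff_subset_singleton_of_differentiableAt {N : Type*} [TopologicalSpace N]
    [CompactSpace N] {c : EuclideanSpace ℝ (Fin n) → N → ℝ} {S : EuclideanSpace ℝ (Fin n) → Set N}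
    (hcont : Continuous fun p : EuclideanSpace ℝ (Fin n) × N =>
      fderiv ℝ (fun x => c x p.2) p.1)
    (hSne : ∀ x, (S x).Nonempty)
    (hSclosed : IsClosed {p : EuclideanSpace ℝ (Fin n) × N | p.2 ∈ S p.1})
    (henv : ∀ x y, DifferentiableAt ℝ ψ x → y ∈ S x →
      fderiv ℝ ψ x = - fderiv ℝ (fun x' => c x' y) x)
    (hx : DifferentiableAt ℝ ψ x) : ClarkeSubdiff ψ x ⊆ {fderiv ℝ ψ x} := by
  refine convexHull_min ?_ (convex_singleton _)
  rintro p ⟨u, hu, hux, hp⟩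
  obtain ⟨y, hy, rfl⟩ :=
    exists_mem_eq_neg_fderiv_of_tendsto_fderiv hcont hSne hSclosed henv hu hux hp
  exact (henv x y hx hy).symm

theorem LipschitzWith.exists_mem_clarkeSubdiff_of_tendsto (hψ : LipschitzWith K ψ)
    {u : ℕ → EuclideanSpace ℝ (Fin n)} (hu : ∀ k, DifferentiableAt ℝ ψ (u k))
    (hux : Tendsto u atTop (𝓝 x)) :
    ∃ p ∈ ClarkeSubdiff ψ x, ∃ φ : ℕ → ℕ, StrictMono φ ∧
      Tendsto (fun k => fderiv ℝ ψ (u (φ k))) atTop (𝓝 p) := by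
  obtain ⟨p, -, φ, hφ, hp⟩ := tendsto_subseq_of_bounded isBounded_closedBall
    fun k => mem_closedBall_zero_iff.2 (norm_fderiv_le_of_lipschitz ℝ hψ (x₀ := u k))
  exact ⟨p, subset_convexHull ℝ _ ⟨u ∘ φ, fun k => hu _, hux.comp hφ.tendsto_atTop, hp⟩,
    φ, hφ, hp⟩

theorem LipschitzWith.clarkeSubdiff_nonempty (hψ : LipschitzWith K ψ) :
    (ClarkeSubdiff ψ x).Nonempty := by
  obtain ⟨u, hu, hux⟩ := mem_closure_iff_seq_limit.1 (hψ.dense_differentiableAt x)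
  obtain ⟨p, hp, -⟩ := hψ.exists_mem_clarkeSubdiff_of_tendsto hu hux
  exact ⟨p, hp⟩

theorem LipschitzWith.eventually_norm_fderiv_sub_le (hψ : LipschitzWith K ψ)
    (hsub : (ClarkeSubdiff ψ x).Subsingleton) {p : EuclideanSpace ℝ (Fin n) →L[ℝ] ℝ}
    (hp : p ∈ ClarkeSubdiff ψ x) {ε : ℝ} (hε : 0 < ε) :
    ∀ᶠ w in 𝓝 x, DifferentiableAt ℝ ψ w → ‖fderiv ℝ ψ w - p‖ ≤ ε := by
  by_contra h
  simp only [not_eventually, Classical.not_imp, not_le] at h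
  obtain ⟨u, hux, hu⟩ := exists_seq_forall_of_frequently h
  obtain ⟨q, hq, φ, -, hφ⟩ :=
    hψ.exists_mem_clarkeSubdiff_of_tendsto (fun k => (hu k).1) hux
  have hlim : Tendsto (fun k => ‖fderiv ℝ ψ (u (φ k)) - p‖) atTop (𝓝 0) := by
    simpa [hsub hq hp] using (hφ.sub_const p).norm
  exact hε.not_ge (ge_of_tendsto hlim (Eventually.of_forall fun k => (hu (φ k)).2.le))

theorem LipschitzWith.differentiableAt_of_clarkeSubdiff_subsingleton (hψ : LipschitzWith K ψ)
    (hsub : (ClarkeSubdiff ψ x).Subsingleton) : DifferentiableAt ℝ ψ x := by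
  obtain ⟨p, hp⟩ := hψ.clarkeSubdiff_nonempty (x := x)
  suffices h : HasFDerivAt ψ p x from h.differentiableAt
  rw [hasFDerivAt_iff_isLittleO_nhds_zero, Asymptotics.isLittleO_iff]
  intro ε hε
  lift ε to ℝ≥0 using hε.le
  obtain ⟨δ, hδ, hclose⟩ :=
    Metric.eventually_nhds_iff_ball.1 (hψ.eventually_norm_fderiv_sub_le hsub hp hε)
  have hlip : LipschitzOnWith ε (ψ - ⇑p) (ball x (δ / 2)) := by
    refine (hψ.sub p.lipschitz).lipschitzOnWith_of_norm_fderiv_le (convex_ball x _) (half_pos hδ)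
      fun w hw hd => ?_
    have hw' : w ∈ ball x δ := by simpa using thickening_ball x (δ / 2) (δ / 2) hw
    have hψd : DifferentiableAt ℝ ψ w := by simpa using hd.add p.differentiableAt
    rw [fderiv_fun_sub hψd p.differentiableAt, p.fderiv]
    exact hclose w hw' hψd
  filter_upwards [ball_mem_nhds (0 : EuclideanSpace ℝ (Fin n)) (half_pos hδ)] with h hh
  have hxh : x + h ∈ ball x (δ / 2) := by simpa using hh
  calc ‖ψ (x + h) - ψ x - p h‖ = ‖(ψ - ⇑p) (x + h) - (ψ - ⇑p) x‖ := by
        simp only [Pi.sub_apply, map_add]; ring_nf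
    _ ≤ ε * ‖x + h - x‖ := hlip.norm_sub_le hxh (mem_ball_self (half_pos hδ))
    _ = ε * ‖h‖ := by rw [add_sub_cancel_left]

end Clarke

theorem stmt7_general {n : ℕ} {N : Type*} [TopologicalSpace N] [CompactSpace N]
    (ψ : EuclideanSpace ℝ (Fin n) → ℝ) (K : NNReal) (hψ : LipschitzWith K ψ)
    (c : EuclideanSpace ℝ (Fin n) → N → ℝ)
    (hcont : Continuous fun p : EuclideanSpace ℝ (Fin n) × N =>
      fderiv ℝ (fun x => c x p.2) p.1)
    (S : EuclideanSpace ℝ (Fin n) → Set N)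
    (hSne : ∀ x, (S x).Nonempty)
    (hSclosed : IsClosed {p : EuclideanSpace ℝ (Fin n) × N | p.2 ∈ S p.1})
    (henv : ∀ x y, DifferentiableAt ℝ ψ x → y ∈ S x →
      fderiv ℝ ψ x = - fderiv ℝ (fun x' => c x' y) x) :
    ∀ x, DifferentiableAt ℝ ψ x ↔ (ClarkeSubdiff ψ x).Subsingleton := fun _ =>
  ⟨fun hx => subsingleton_singleton.anti
      (clarkeSubdiff_subset_singleton_of_differentiableAt hcont hSne hSclosed henv hx),
    hψ.differentiableAt_of_clarkeSubdiff_subsingleton⟩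

/-- For a Lipschitz potential `ψ` whose `c`-subdifferential `S x = ∂_cψ(x)` is nonempty with
closed graph (for `N` compact, `c` of class `C¹` in `x` with jointly continuous `x`-derivative),
and for which the envelope identity `dψ(x) = −∂c/∂x(x,y)` holds at differentiability points `x`
and `y ∈ ∂_cψ(x)`, differentiability of `ψ` at `x` is equivalent to the Clarke differential
`∂ψ(x)` being a singleton. -/
theorem stmt7 {n : ℕ} {N : Type*} [TopologicalSpace N] [CompactSpace N]
    (ψ : EuclideanSpace ℝ (Fin n) → ℝ) (K : NNReal) (hψ : LipschitzWith K ψ)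
    (c : EuclideanSpace ℝ (Fin n) → N → ℝ)
    (hcx : ∀ y : N, Differentiable ℝ fun x => c x y)
    (hcont : Continuous fun p : EuclideanSpace ℝ (Fin n) × N =>
      fderiv ℝ (fun x => c x p.2) p.1)
    (S : EuclideanSpace ℝ (Fin n) → Set N)
    (hSne : ∀ x, (S x).Nonempty)
    (hSclosed : IsClosed {p : EuclideanSpace ℝ (Fin n) × N | p.2 ∈ S p.1})
    (henv : ∀ x y, DifferentiableAt ℝ ψ x → y ∈ S x →
      fderiv ℝ ψ x = - fderiv ℝ (fun x' => c x' y) x) :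
    ∀ x, DifferentiableAt ℝ ψ x ↔ (ClarkeSubdiff ψ x).Subsingleton :=
  stmt7_general ψ K hψ c hcont S hSne hSclosed henv
end

section
/- Let X, Y be spaces and consider Borel sets E_k (k ≥ 1), E_k^h, E_k^v ⊂ E_k for k ≥ 2, in X × Y representing points of chain-level exactly k, with the following combinatorial property (Lemma 'Graph and antigraph properties'): if (x,y_i) ∈ E_i and (x,y_j) ∈ E_j with j ≥ i ≥ 1 and y_i ≠ y_j, then i ≥ 2, and either j = i+1 with (x,y_i) ∈ E_i^h and (x,y_j) ∈ E_{i+1} \ E_{i+1}^h (i.e. E_{i+1}^{v−}), or j = i and both points lie in E_i \ E_i^h. Define G_{2i+1} = E_{2i+2}^h ∪ (E_{2i+1} minus the vertical part, i.e. E_{2i+1}^{h−} ∪ E_{2i+1}^{hv}) for i ≥ 1, and G_1 = E_1 ∪ E_2^{h−}. Then each G_{2i+1} is a graph: for all (x,y), (x,y') ∈ G_{2i+1}, y = y'. -/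
/-- A subset `S ⊆ X × Y` is a graph if it meets each vertical fiber at most once. -/
def IsGraphSet {X Y : Type*} (S : Set (X × Y)) : Prop :=
  ∀ (x : X) (y y' : Y), (x, y) ∈ S → (x, y') ∈ S → y = y'

/-- Graph property of the odd limbs. `E k` are the (disjoint) sets of points of chain-level
exactly `k`, `Eh k ⊆ E k` (resp. `Ev k ⊆ E k`) the horizontal (resp. vertical) ends, with
`E k ⊆ Eh k ∪ Ev k` for `k ≥ 2`.  Assuming the key dichotomy for two points sharing the same
`x`-coordinate, the sets `G₁ = E₁ ∪ E₂^{h−}` and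
`G_{2i+1} = E_{2i+2}^h ∪ E_{2i+1}^{h−} ∪ E_{2i+1}^{hv}` (for `i ≥ 1`) are graphs. -/
theorem stmt8 {X Y : Type*} (E Eh Ev : ℕ → Set (X × Y))
    (hEh : ∀ k, Eh k ⊆ E k) (hEv : ∀ k, Ev k ⊆ E k)
    (hcover : ∀ k, 2 ≤ k → E k ⊆ Eh k ∪ Ev k)
    (hdisj : ∀ i j, i ≠ j → Disjoint (E i) (E j))
    (hkey : ∀ (x : X) (yi yj : Y) (i j : ℕ), 1 ≤ i → i ≤ j →
      (x, yi) ∈ E i → (x, yj) ∈ E j → yi ≠ yj →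
      2 ≤ i ∧ ((j = i + 1 ∧ (x, yi) ∈ Eh i ∧ (x, yj) ∈ E (i + 1) \ Eh (i + 1)) ∨
        (j = i ∧ (x, yi) ∈ E i \ Eh i ∧ (x, yj) ∈ E i \ Eh i))) :
    IsGraphSet (E 1 ∪ (E 2 \ Ev 2)) ∧
    ∀ i : ℕ, 1 ≤ i →
      IsGraphSet (Eh (2 * i + 2) ∪
        ((E (2 * i + 1) \ Ev (2 * i + 1)) ∪ (Eh (2 * i + 1) ∩ Ev (2 * i + 1)))) := by
  -- two points in Eh k at the same level k ≥ 2 agree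
  have same : ∀ (x : X) (y y' : Y) (k : ℕ), 2 ≤ k →
      (x, y) ∈ Eh k → (x, y') ∈ Eh k → y = y' := by
    intro x y y' k hk hy hy'
    by_contra hne
    obtain ⟨-, h⟩ := hkey x y y' k k (by omega) le_rfl (hEh k hy) (hEh k hy') hne
    rcases h with ⟨hj, -, -⟩ | ⟨-, ⟨-, hnh⟩, -⟩
    · omega
    · exact hnh hy
  -- a point in Eh k and one in Eh (k+1), k ≥ 2, can't share an x-coordinate (differing y)
  have cross : ∀ (x : X) (y y' : Y) (k : ℕ), 2 ≤ k →
      (x, y) ∈ Eh k → (x, y') ∈ Eh (k + 1) → y = y' := by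
    intro x y y' k hk hy hy'
    by_contra hne
    obtain ⟨-, h⟩ := hkey x y y' k (k + 1) (by omega) (by omega)
      (hEh k hy) (hEh (k + 1) hy') hne
    rcases h with ⟨-, -, -, hnh⟩ | ⟨hj, -, -⟩
    · exact hnh hy'
    · omega
  constructor
  · -- G₁
    intro x y y' hy hy'
    by_contra hne
    -- E 2 \ Ev 2 ⊆ Eh 2
    have hsub : ∀ z : Y, (x, z) ∈ E 2 \ Ev 2 → (x, z) ∈ Eh 2 := by
      intro z ⟨hz, hnz⟩
      rcases hcover 2 le_rfl hz with h | h
      · exact h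
      · exact absurd h hnz
    rcases hy with hy | hy <;> rcases hy' with hy' | hy'
    · obtain ⟨h2, -⟩ := hkey x y y' 1 1 le_rfl le_rfl hy hy' hne
      omega
    · obtain ⟨h2, -⟩ := hkey x y y' 1 2 le_rfl (by omega) hy (hy'.1) hne
      omega
    · obtain ⟨h2, -⟩ := hkey x y' y 1 2 le_rfl (by omega) hy' (hy.1) (Ne.symm hne)
      omega
    · exact hne (same x y y' 2 le_rfl (hsub y hy) (hsub y' hy'))
  · intro i hi x y y' hy hy'
    set k := 2 * i + 1 with hkdef
    have hk : 2 ≤ k := by omega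
    have hsub : ∀ z : Y,
        (x, z) ∈ (E k \ Ev k) ∪ (Eh k ∩ Ev k) → (x, z) ∈ Eh k := by
      intro z hz
      rcases hz with ⟨hz, hnz⟩ | ⟨hz, -⟩
      · rcases hcover k hk hz with h | h
        · exact h
        · exact absurd h hnz
      · exact hz
    rcases hy with hy | hy <;> rcases hy' with hy' | hy'
    · exact same x y y' (k + 1) (by omega) hy hy'
    · exact (cross x y' y k hk (hsub y' hy') hy).symm
    · exact cross x y y' k hk (hsub y hy) hy'
    · exact same x y y' k hk (hsub y hy) (hsub y' hy')
end

section
/- Fix compact metric spaces M, N and Borel probability measures μ, ν. For c ∈ C^0(M×N;R) let M(c) ⊂ Π(μ,ν) denote the set of optimal transport plans (minimizers of π ↦ ∫ c dπ over Π(μ,ν)). Then there exists a residual subset C of C^0(M×N;R) (in the uniform topology) such that M(c) is a singleton for every c ∈ C. -/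
/-!
Let `V c = inf_{π ∈ Π(μ,ν)} ∫ c dπ` be the optimal value. It is 1-Lipschitz in `c`, and for every
optimal plan `π` the functional `∫ · dπ` lies above `V` and touches it at `c`. By Rademacher's
theorem on the lines `t ↦ V (c + t • f)`, costs at which all such supporting functionals take
values `ε`-close to each other at `f` are dense, and this condition is open. Intersecting over
`f` in a countable dense set and `ε = 1/(l+1)` gives a residual set of costs at which the
supporting functional is unique; a Borel probability measure on a compact metric space is
determined by the integrals of continuous functions.
-/

open MeasureTheory TopologicalSpace Filter Set
open scoped NNReal

section SecantSlopes

variable {E : Type*} [NormedAddCommGroup E] [NormedSpace ℝ E]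

/-- Pins every supergradient `a` of `V` at `c` along `f` (that is, `V (c + s • f) ≤ V c + s * a`
for all `s`) into the interval `(D - ε, D + ε)`. -/
def SecantSlopesPinched (V : E → ℝ) (f : E) (ε : ℝ) (c : E) : Prop :=
  ∃ D t : ℝ, 0 < t ∧ V c + t * (D - ε) < V (c + t • f) ∧ V c - t * (D + ε) < V (c - t • f)

theorem isOpen_setOf_secantSlopesPinched {V : E → ℝ} (hV : Continuous V) (f : E) (ε : ℝ) :
    IsOpen {c | SecantSlopesPinched V f ε c} := by
  have : {c | SecantSlopesPinched V f ε c} = ⋃ (D : ℝ) (t : ℝ) (_ : 0 < t),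
      {c | V c + t * (D - ε) < V (c + t • f)} ∩ {c | V c - t * (D + ε) < V (c - t • f)} := by
    ext; simp only [SecantSlopesPinched, mem_ofPred_eq, mem_iUnion, mem_inter_iff, exists_prop]
  rw [this]
  exact isOpen_iUnion fun D => isOpen_iUnion fun t => isOpen_iUnion fun _ =>
    (isOpen_lt (by fun_prop) (by fun_prop)).inter (isOpen_lt (by fun_prop) (by fun_prop))

theorem secantSlopesPinched_of_hasDerivAt {V : E → ℝ} {c f : E} {D ε : ℝ}
    (h : HasDerivAt (fun t : ℝ => V (c + t • f)) D 0) (hε : 0 < ε) :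
    SecantSlopesPinched V f ε c := by
  obtain ⟨δ, hδ, hslope⟩ := Metric.tendsto_nhdsWithin_nhds.1 h.tendsto_slope_zero ε hε
  have hδ' : 0 < δ / 2 := half_pos hδ
  have close : ∀ s : ℝ, s ≠ 0 → |s| < δ → |s⁻¹ * (V (c + s • f) - V c) - D| < ε :=
    fun s hs hsδ => by simpa [Real.dist_eq] using hslope hs (by simpa [Real.dist_eq] using hsδ)
  refine ⟨D, δ / 2, hδ', ?_, ?_⟩
  · have := (abs_lt.1 (close (δ / 2) hδ'.ne' (by rw [abs_of_pos hδ']; linarith))).1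
    rw [lt_sub_iff_add_lt, inv_mul_eq_div, lt_div_iff₀ hδ'] at this
    linarith
  · have := (abs_lt.1 (close (-(δ / 2)) (by linarith)
      (by rw [abs_neg, abs_of_pos hδ']; linarith))).2
    rw [sub_lt_iff_lt_add', inv_mul_eq_div, div_lt_iff_of_neg (by linarith), neg_smul,
      ← sub_eq_add_neg] at this
    linarith

theorem dense_setOf_secantSlopesPinched {V : E → ℝ} {K : ℝ≥0} (hV : LipschitzWith K V) (f : E)
    {ε : ℝ} (hε : 0 < ε) : Dense {c | SecantSlopesPinched V f ε c} := by
  refine Metric.dense_iff.2 fun c₀ r hr => ?_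
  have hline : LipschitzWith _ fun t : ℝ => V (c₀ + t • f) :=
    hV.comp <| (isometry_vadd E c₀).lipschitz.comp
      (ContinuousLinearMap.toSpanSingleton ℝ f).lipschitz
  have hnear : IsOpen {t : ℝ | c₀ + t • f ∈ Metric.ball c₀ r} :=
    Metric.isOpen_ball.preimage (by fun_prop)
  obtain ⟨s, hdiff, hs⟩ := (volume.dense_of_ae hline.ae_differentiableAt).exists_mem_open hnear
    ⟨0, by simpa using hr⟩
  have hderiv : HasDerivAt (fun t : ℝ => V (c₀ + s • f + t • f))
      (deriv (fun t : ℝ => V (c₀ + t • f)) s) 0 := by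
    simpa [add_assoc, ← add_smul] using
      HasDerivAt.comp_const_add s 0 (by rw [add_zero]; exact hdiff.hasDerivAt)
  exact ⟨c₀ + s • f, hs, secantSlopesPinched_of_hasDerivAt hderiv hε⟩

theorem abs_sub_lt_of_secantSlopesPinched {V : E → ℝ} {f c : E} {ε : ℝ}
    (h : SecantSlopesPinched V f ε c) {L₁ L₂ : StrongDual ℝ E}
    (hL₁ : ∀ x, V x ≤ L₁ x) (hc₁ : V c = L₁ c) (hL₂ : ∀ x, V x ≤ L₂ x) (hc₂ : V c = L₂ c) :
    |L₁ f - L₂ f| < 2 * ε := by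
  obtain ⟨D, t, ht, hfwd, hbwd⟩ := h
  have pinched : ∀ L : StrongDual ℝ E, (∀ x, V x ≤ L x) → V c = L c →
      D - ε < L f ∧ L f < D + ε := by
    intro L hL hc
    have hup : V (c + t • f) ≤ V c + t * L f := by simpa [hc] using hL (c + t • f)
    have hdown : V (c - t • f) ≤ V c - t * L f := by simpa [hc] using hL (c - t • f)
    constructor <;> nlinarith
  obtain ⟨h₁, h₁'⟩ := pinched L₁ hL₁ hc₁
  obtain ⟨h₂, h₂'⟩ := pinched L₂ hL₂ hc₂
  rw [abs_sub_lt_iff]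
  constructor <;> linarith

theorem eventually_residual_supporting_functional_unique [SeparableSpace E] {V : E → ℝ}
    {K : ℝ≥0} (hV : LipschitzWith K V) :
    ∀ᶠ c in residual E, ∀ L₁ L₂ : StrongDual ℝ E, (∀ x, V x ≤ L₁ x) → V c = L₁ c →
      (∀ x, V x ≤ L₂ x) → V c = L₂ c → L₁ = L₂ := by
  obtain ⟨f, hf⟩ := exists_dense_seq E
  have hpinched : ∀ n l : ℕ, ∀ᶠ c in residual E, SecantSlopesPinched V (f n) (1 / (l + 1)) c :=
    fun n l => residual_of_dense_open (isOpen_setOf_secantSlopesPinched hV.continuous _ _)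
      (dense_setOf_secantSlopesPinched hV _ Nat.one_div_pos_of_nat)
  filter_upwards [eventually_countable_forall.2 fun n => eventually_countable_forall.2 (hpinched n)]
    with c hc L₁ L₂ hL₁ hc₁ hL₂ hc₂
  refine DFunLike.coe_injective (hf.equalizer L₁.continuous L₂.continuous (funext fun n => ?_))
  refine eq_of_forall_dist_le fun δ hδ => ?_
  obtain ⟨l, hl⟩ := exists_nat_one_div_lt (half_pos hδ)
  have := abs_sub_lt_of_secantSlopesPinched (hc n l) hL₁ hc₁ hL₂ hc₂
  rw [Function.comp_apply, Function.comp_apply, Real.dist_eq]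
  linarith

end SecantSlopes

theorem LipschitzWith.ciInf {α ι : Type*} [PseudoMetricSpace α] [Nonempty ι] {f : ι → α → ℝ}
    {K : ℝ≥0} (hf : ∀ i, LipschitzWith K (f i)) (hbdd : ∀ x, BddBelow (range fun i => f i x)) :
    LipschitzWith K fun x => ⨅ i, f i x := by
  refine LipschitzWith.of_le_add_mul K fun x y => ?_
  rw [← sub_le_iff_le_add]
  exact le_ciInf fun i => sub_le_iff_le_add.2 <|
    (ciInf_le (hbdd x) i).trans ((hf i).le_add_mul x y)

namespace MeasureTheory.ProbabilityMeasure

variable {X : Type*} [TopologicalSpace X] [CompactSpace X] [MeasurableSpace X]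

noncomputable def integralCLM [OpensMeasurableSpace X] (π : ProbabilityMeasure X) :
    C(X, ℝ) →L[ℝ] ℝ :=
  LinearMap.mkContinuous
    { toFun := fun c => ∫ x, c x ∂π
      map_add' := fun c c' =>
        integral_add ((BoundedContinuousFunction.mkOfCompact c).integrable _)
          ((BoundedContinuousFunction.mkOfCompact c').integrable _)
      map_smul' := fun a c => integral_const_mul a _ }
    1 fun c => by
      rw [one_mul]
      exact (BoundedContinuousFunction.mkOfCompact c).norm_integral_le_norm (π : Measure X)

theorem norm_integralCLM_le [OpensMeasurableSpace X] (π : ProbabilityMeasure X) :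
    ‖π.integralCLM‖ ≤ 1 :=
  LinearMap.mkContinuous_norm_le _ zero_le_one _

theorem lipschitzWith_integralCLM [OpensMeasurableSpace X] (π : ProbabilityMeasure X) :
    LipschitzWith 1 π.integralCLM :=
  ContinuousLinearMap.lipschitzWith_of_opNorm_le <| by
    rw [NNReal.coe_one]; exact norm_integralCLM_le π

theorem bddBelow_range_integralCLM_apply [OpensMeasurableSpace X] {ι : Type*}
    (π : ι → ProbabilityMeasure X) (c : C(X, ℝ)) :
    BddBelow (range fun i => (π i).integralCLM c) :=
  ⟨-‖c‖, by
    rintro _ ⟨i, rfl⟩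
    exact neg_le_of_abs_le ((BoundedContinuousFunction.mkOfCompact c).norm_integral_le_norm _)⟩

theorem integralCLM_injective [HasOuterApproxClosed X] [BorelSpace X] :
    Function.Injective (integralCLM : ProbabilityMeasure X → C(X, ℝ) →L[ℝ] ℝ) :=
  fun _ _ h => toMeasure_injective <| ext_of_forall_integral_eq_of_IsFiniteMeasure fun f =>
    DFunLike.congr_fun h f.toContinuousMap

end MeasureTheory.ProbabilityMeasure

/-- Generic uniqueness of optimal plans for fixed marginals (Levin): for compact metric spaces
with Borel probability measures `μ`, `ν`, there is a residual set of costs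
`c ∈ C⁰(M × N; ℝ)` for which the optimal transport plan between `μ` and `ν` is unique. -/
theorem stmt16 {M N : Type*}
    [MetricSpace M] [CompactSpace M] [MeasurableSpace M] [BorelSpace M]
    [MetricSpace N] [CompactSpace N] [MeasurableSpace N] [BorelSpace N]
    (μ : Measure M) (ν : Measure N) [IsProbabilityMeasure μ] [IsProbabilityMeasure ν] :
    let Plan : Set (ProbabilityMeasure (M × N)) :=
      {π | π.toMeasure.map Prod.fst = μ ∧ π.toMeasure.map Prod.snd = ν}
    let Opt : ContinuousMap (M × N) ℝ → ProbabilityMeasure (M × N) → Prop := fun c π =>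
      π ∈ Plan ∧ ∀ π' ∈ Plan, ∫ p, c p ∂π.toMeasure ≤ ∫ p, c p ∂π'.toMeasure
    ∃ C ∈ residual (ContinuousMap (M × N) ℝ), ∀ c ∈ C,
      ∀ π₁ π₂ : ProbabilityMeasure (M × N), Opt c π₁ → Opt c π₂ → π₁ = π₂ := by
  intro Plan Opt
  have : Nonempty Plan := ⟨⟨⟨μ.prod ν, inferInstance⟩, by
    show (μ.prod ν).map Prod.fst = μ ∧ (μ.prod ν).map Prod.snd = ν
    simp⟩⟩
  let V : C(M × N, ℝ) → ℝ := fun c => ⨅ π : Plan, (π : ProbabilityMeasure (M × N)).integralCLM c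
  have hbdd (c) : BddBelow (range fun π : Plan => (π : ProbabilityMeasure (M × N)).integralCLM c) :=
    ProbabilityMeasure.bddBelow_range_integralCLM_apply _ c
  have hV : LipschitzWith 1 V :=
    LipschitzWith.ciInf (fun π => ProbabilityMeasure.lipschitzWith_integralCLM _) hbdd
  have supporting : ∀ c π, Opt c π →
      (∀ c', V c' ≤ π.integralCLM c') ∧ V c = π.integralCLM c := fun c π ⟨hπ, hopt⟩ =>
    ⟨fun c' => ciInf_le (hbdd c') ⟨π, hπ⟩,
      le_antisymm (ciInf_le (hbdd c) ⟨π, hπ⟩) (le_ciInf fun π' => hopt π' π'.2)⟩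
  refine ⟨_, eventually_residual_supporting_functional_unique hV, fun c hc π₁ π₂ h₁ h₂ => ?_⟩
  obtain ⟨hle₁, heq₁⟩ := supporting c π₁ h₁
  obtain ⟨hle₂, heq₂⟩ := supporting c π₂ h₂
  exact ProbabilityMeasure.integralCLM_injective (hc _ _ hle₁ heq₁ hle₂ heq₂)
end
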